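/- A 4-dimensional linear subspace H of the Iwasawa Lie algebra is a Lie subalgebra (i.e. [H,H] ⊆ H) if and only if H contains the centre span{e₅,e₆}; equivalently, an orthogonal almost product structure given by an orthonormal pair a, b has integrable 4-dimensional horizontal distribution H = (span{a,b})^⊥ exactly when a, b ∈ span{e₁,e₂,e₃,e₄}. Consequently the set of moment map values of this class of almost product structures is {μ(baᵀ − abᵀ) : a, b ∈ span{e₁,e₂,e₃,e₄} orthonormal} = {(x, y, 0) ∈ ℝ³ : |x| + |y| ≤ 1}, the intersection of the moment octahedron with the plane z = 0. -/
import Mathlib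


open Matrix

noncomputable section

/-- The toric moment map `μ(A) = (⟨Ae₁,e₂⟩, ⟨Ae₃,e₄⟩, ⟨Ae₅,e₆⟩)`. -/
def μ (A : Matrix (Fin 6) (Fin 6) ℝ) : ℝ × ℝ × ℝ := (A 1 0, A 3 2, A 5 4)

/-- The 2-step nilpotent Lie bracket of the Iwasawa Lie algebra on `ℝ⁶`:
`[e₁,e₃] = e₅`, `[e₄,e₂] = e₅`, `[e₁,e₄] = e₆`, `[e₂,e₃] = e₆`. -/
def br (X Y : Fin 6 → ℝ) : Fin 6 → ℝ :=
  ![0, 0, 0, 0,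
    X 0 * Y 2 - X 2 * Y 0 + X 3 * Y 1 - X 1 * Y 3,
    X 0 * Y 3 - X 3 * Y 0 + X 1 * Y 2 - X 2 * Y 1]

/-- The centre `span{e₅, e₆}` of the Iwasawa Lie algebra. -/
def centre : Submodule ℝ (Fin 6 → ℝ) :=
  Submodule.span ℝ {Pi.single 4 1, Pi.single 5 1}

/-- The subspace `span{e₁, e₂, e₃, e₄}` of the Iwasawa Lie algebra. -/
def V4 : Submodule ℝ (Fin 6 → ℝ) :=
  Submodule.span ℝ {Pi.single 0 1, Pi.single 1 1, Pi.single 2 1, Pi.single 3 1}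

section IwAux
set_option maxHeartbeats 1000000

def Iw.E (i : Fin 6) : Fin 6 → ℝ := Pi.single i 1

@[simp] lemma Iw.cons_val_five {α : Type*} (x : α) (u : Fin 5 → α) :
    Matrix.vecCons x u 5 = u 4 := rfl

namespace Iw

def πL : (Fin 6 → ℝ) →ₗ[ℝ] (Fin 6 → ℝ) where
  toFun X := ![X 0, X 1, X 2, X 3, 0, 0]
  map_add' X Y := by funext i; fin_cases i <;> simp
  map_smul' c X := by funext i; fin_cases i <;> simp

def JL : (Fin 6 → ℝ) ≃ₗ[ℝ] (Fin 6 → ℝ) where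
  toFun X := ![-X 1, X 0, -X 3, X 2, -X 5, X 4]
  invFun X := ![X 1, -X 0, X 3, -X 2, X 5, -X 4]
  left_inv X := by funext i; fin_cases i <;> simp
  right_inv X := by funext i; fin_cases i <;> simp
  map_add' X Y := by funext i; fin_cases i <;> (simp; try ring)
  map_smul' c X := by funext i; fin_cases i <;> (simp; try ring)

lemma JL_apply (X : Fin 6 → ℝ) : JL X = ![-X 1, X 0, -X 3, X 2, -X 5, X 4] := rfl

lemma piL_apply (X : Fin 6 → ℝ) : πL X = ![X 0, X 1, X 2, X 3, 0, 0] := rfl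

lemma mem_centre (X : Fin 6 → ℝ) :
    X ∈ centre ↔ X 0 = 0 ∧ X 1 = 0 ∧ X 2 = 0 ∧ X 3 = 0 := by
  constructor
  · intro h
    induction h using Submodule.span_induction with
    | mem x hx =>
      rcases hx with h | h <;> subst h <;>
        refine ⟨?_, ?_, ?_, ?_⟩ <;> simp [Pi.single_apply]
    | zero => simp
    | add x y _ _ hx hy =>
      obtain ⟨h1, h2, h3, h4⟩ := hx; obtain ⟨g1, g2, g3, g4⟩ := hy
      refine ⟨?_, ?_, ?_, ?_⟩ <;> simp [h1, h2, h3, h4, g1, g2, g3, g4]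
    | smul c x _ hx =>
      obtain ⟨h1, h2, h3, h4⟩ := hx
      refine ⟨?_, ?_, ?_, ?_⟩ <;> simp [h1, h2, h3, h4]
  · rintro ⟨h0, h1, h2, h3⟩
    have hX : X = X 4 • Iw.E 4 + X 5 • Iw.E 5 := by
      funext i; fin_cases i <;> simp [h0, h1, h2, h3, Iw.E, Pi.single_apply]
    rw [hX]
    exact add_mem
      (Submodule.smul_mem _ _ (Submodule.subset_span (by left; rfl)))
      (Submodule.smul_mem _ _ (Submodule.subset_span (by right; rfl)))

lemma mem_V4 (X : Fin 6 → ℝ) : X ∈ V4 ↔ X 4 = 0 ∧ X 5 = 0 := by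
  constructor
  · intro h
    induction h using Submodule.span_induction with
    | mem x hx =>
      rcases hx with h | h | h | h <;> subst h <;>
        refine ⟨?_, ?_⟩ <;> simp [Pi.single_apply]
    | zero => simp
    | add x y _ _ hx hy =>
      obtain ⟨h1, h2⟩ := hx; obtain ⟨g1, g2⟩ := hy
      refine ⟨?_, ?_⟩ <;> simp [h1, h2, g1, g2]
    | smul c x _ hx =>
      obtain ⟨h1, h2⟩ := hx
      refine ⟨?_, ?_⟩ <;> simp [h1, h2]
  · rintro ⟨h4, h5⟩
    have hX : X = X 0 • Iw.E 0 + X 1 • Iw.E 1 + X 2 • Iw.E 2 + X 3 • Iw.E 3 := by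
      funext i; fin_cases i <;> simp [h4, h5, Iw.E, Pi.single_apply]
    rw [hX]
    exact add_mem (add_mem (add_mem
      (Submodule.smul_mem _ _ (Submodule.subset_span (by left; rfl)))
      (Submodule.smul_mem _ _ (Submodule.subset_span (by right; left; rfl))))
      (Submodule.smul_mem _ _ (Submodule.subset_span (by right; right; left; rfl))))
      (Submodule.smul_mem _ _ (Submodule.subset_span (by right; right; right; rfl)))

end Iw

namespace Iw

lemma br_eta (X Y : Fin 6 → ℝ) :
    br X Y = (br X Y 4) • E 4 + (br X Y 5) • E 5 := by
  funext i; fin_cases i <;> simp [br, E, Pi.single_apply]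

lemma br_mem_centre (X Y : Fin 6 → ℝ) : br X Y ∈ centre := by
  rw [mem_centre]; exact ⟨rfl, rfl, rfl, rfl⟩

lemma br_pi_left (X Y : Fin 6 → ℝ) : br (πL X) Y = br X Y := by
  funext i; fin_cases i <;> simp [br, πL]

lemma br_zero_of_centre_right (X Y : Fin 6 → ℝ) (h : Y ∈ centre) : br X Y = 0 := by
  rw [mem_centre] at h
  obtain ⟨h0, h1, h2, h3⟩ := h
  funext i; fin_cases i <;> simp [br, h0, h1, h2, h3]

lemma br_J_left (X Y : Fin 6 → ℝ) : br (JL X) Y = JL (br X Y) := by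
  funext i; fin_cases i <;> (simp [br, JL]; try ring)

lemma ker_pi : LinearMap.ker πL = centre := by
  ext X
  rw [LinearMap.mem_ker, mem_centre]
  constructor
  · intro h
    exact ⟨congrFun h 0, congrFun h 1, congrFun h 2, congrFun h 3⟩
  · rintro ⟨h0, h1, h2, h3⟩
    funext i; fin_cases i <;> simp [πL, h0, h1, h2, h3]

lemma range_pi : LinearMap.range πL = V4 := by
  ext X
  rw [LinearMap.mem_range, mem_V4]
  constructor
  · rintro ⟨Y, rfl⟩; exact ⟨rfl, rfl⟩
  · rintro ⟨h4, h5⟩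
    refine ⟨X, ?_⟩
    funext i; fin_cases i <;> simp [πL, h4, h5]

lemma pi_J_comm (X : Fin 6 → ℝ) : πL (JL X) = JL (πL X) := by
  funext i; fin_cases i <;> simp [πL, JL]

lemma J_mem_V4 {z : Fin 6 → ℝ} (h : z ∈ V4) : JL z ∈ V4 := by
  rw [mem_V4] at h ⊢
  exact ⟨by simp [JL, h.2], by simp [JL, h.1]⟩

def ψ : (Fin 4 → ℝ) →ₗ[ℝ] (Fin 6 → ℝ) where
  toFun v := ![v 0, v 1, v 2, v 3, 0, 0]
  map_add' X Y := by funext i; fin_cases i <;> simp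
  map_smul' c X := by funext i; fin_cases i <;> simp

lemma range_psi : LinearMap.range ψ = V4 := by
  ext X
  rw [LinearMap.mem_range, mem_V4]
  constructor
  · rintro ⟨Y, rfl⟩; exact ⟨rfl, rfl⟩
  · rintro ⟨h4, h5⟩
    refine ⟨![X 0, X 1, X 2, X 3], ?_⟩
    funext i; fin_cases i <;> simp [ψ, h4, h5]

lemma psi_inj : Function.Injective ψ := by
  rw [← LinearMap.ker_eq_bot]
  ext v
  simp only [LinearMap.mem_ker, Submodule.mem_bot]
  constructor
  · intro h
    funext i; fin_cases i
    · exact congrFun h 0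
    · exact congrFun h 1
    · exact congrFun h 2
    · exact congrFun h 3
  · rintro rfl
    funext i; fin_cases i <;> simp [ψ]

lemma finrank_V4 : Module.finrank ℝ V4 = 4 := by
  rw [← range_psi, LinearMap.finrank_range_of_inj psi_inj,
    Module.finrank_fintype_fun_eq_card, Fintype.card_fin]

lemma finrank_centre : Module.finrank ℝ centre = 2 := by
  have h := LinearMap.finrank_range_add_finrank_ker πL
  rw [range_pi, ker_pi, finrank_V4, Module.finrank_fintype_fun_eq_card,
    Fintype.card_fin] at h
  omega

end Iw

namespace Iw

def g (v : Fin 6 → ℝ) : (Fin 6 → ℝ) →ₗ[ℝ] (Fin 2 → ℝ) where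
  toFun Y := ![br v Y 4, br v Y 5]
  map_add' Y Z := by funext i; fin_cases i <;> (simp [br]; ring)
  map_smul' c Y := by funext i; fin_cases i <;> (simp [br]; ring)

lemma g_surj {v : Fin 6 → ℝ} (hv : πL v ≠ 0) : Function.Surjective (g v) := by
  intro pq
  set p := pq 0 with hp
  set q := pq 1 with hq
  have hvi : ¬ (v 0 = 0 ∧ v 1 = 0 ∧ v 2 = 0 ∧ v 3 = 0) := by
    rintro ⟨h0, h1, h2, h3⟩
    exact hv (by funext i; fin_cases i <;> simp [πL, h0, h1, h2, h3])
  have hpq : pq = ![p, q] := by funext i; fin_cases i <;> simp [hp, hq]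
  by_cases h01 : v 0 = 0 ∧ v 1 = 0
  · have h23 : ¬ (v 2 = 0 ∧ v 3 = 0) := fun h => hvi ⟨h01.1, h01.2, h.1, h.2⟩
    have hs : v 2 ^ 2 + v 3 ^ 2 ≠ 0 := by
      intro h
      exact h23 ⟨by nlinarith [sq_nonneg (v 2), sq_nonneg (v 3)],
        by nlinarith [sq_nonneg (v 2), sq_nonneg (v 3)]⟩
    refine ⟨![-(v 2 * p + v 3 * q) / (v 2 ^ 2 + v 3 ^ 2),
      (v 3 * p - v 2 * q) / (v 2 ^ 2 + v 3 ^ 2), 0, 0, 0, 0], ?_⟩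
    rw [hpq]
    funext i; fin_cases i <;> (simp [g, br]; field_simp; ring)
  · have hs : v 0 ^ 2 + v 1 ^ 2 ≠ 0 := by
      intro h
      exact h01 ⟨by nlinarith [sq_nonneg (v 0), sq_nonneg (v 1)],
        by nlinarith [sq_nonneg (v 0), sq_nonneg (v 1)]⟩
    refine ⟨![0, 0, (v 0 * p + v 1 * q) / (v 0 ^ 2 + v 1 ^ 2),
      (v 0 * q - v 1 * p) / (v 0 ^ 2 + v 1 ^ 2), 0, 0], ?_⟩
    rw [hpq]
    funext i; fin_cases i <;> (simp [g, br]; field_simp; ring)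

lemma centre_le_of_closed (H : Submodule ℝ (Fin 6 → ℝ)) (hdim : Module.finrank ℝ H = 4)
    (hcl : ∀ X ∈ H, ∀ Y ∈ H, br X Y ∈ H) : centre ≤ H := by
  classical
  set f : H →ₗ[ℝ] (Fin 6 → ℝ) := πL.comp H.subtype with hf
  have hrange : LinearMap.range f = H.map πL := by
    rw [hf, LinearMap.range_comp, Submodule.range_subtype]
  have hker : LinearMap.ker f = centre.comap H.subtype := by
    rw [hf, LinearMap.ker_comp, ker_pi]
  have e2 : Module.finrank ℝ (centre.comap H.subtype) =
      Module.finrank ℝ (H ⊓ centre : Submodule ℝ (Fin 6 → ℝ)) := by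
    rw [← Submodule.finrank_map_subtype_eq H (centre.comap H.subtype),
      Submodule.map_comap_subtype]
  have e1 := LinearMap.finrank_range_add_finrank_ker f
  rw [hrange, hker, e2, hdim] at e1
  rcases le_or_gt 2 (Module.finrank ℝ (H ⊓ centre : Submodule ℝ (Fin 6 → ℝ))) with hc | hc
  · have heq : H ⊓ centre = centre :=
      Submodule.eq_of_le_of_finrank_le inf_le_right (by rw [finrank_centre]; exact hc)
    exact le_of_eq_of_le heq.symm inf_le_left
  · have hW : 3 ≤ Module.finrank ℝ (H.map πL) := by omega
    set W := H.map πL with hWdef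
    set Wj := W.map JL.toLinearMap with hWjdef
    have hWV4 : W ≤ V4 := by
      rintro x hx
      obtain ⟨y, -, rfl⟩ := hx
      rw [← range_pi]
      exact ⟨y, rfl⟩
    have hWjV4 : Wj ≤ V4 := by
      rintro x hx
      obtain ⟨y, hy, rfl⟩ := hx
      exact J_mem_V4 (hWV4 hy)
    have hWj : Module.finrank ℝ Wj = Module.finrank ℝ W :=
      LinearEquiv.finrank_map_eq JL W
    have h1 : Module.finrank ℝ (W ⊔ Wj : Submodule ℝ (Fin 6 → ℝ)) ≤ 4 := by
      rw [← finrank_V4]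
      exact Submodule.finrank_mono (sup_le hWV4 hWjV4)
    have h2 := Submodule.finrank_sup_add_finrank_inf_eq W Wj
    have hinfpos : 0 < Module.finrank ℝ (W ⊓ Wj : Submodule ℝ (Fin 6 → ℝ)) := by omega
    have hne : (W ⊓ Wj : Submodule ℝ (Fin 6 → ℝ)) ≠ ⊥ := by
      intro h
      rw [h, finrank_bot] at hinfpos
      exact lt_irrefl 0 hinfpos
    obtain ⟨z, hzmem, hz0⟩ := Submodule.exists_mem_ne_zero_of_ne_bot hne
    obtain ⟨hzW, hzWj⟩ := Submodule.mem_inf.mp hzmem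
    obtain ⟨u, huH, hu⟩ := hzW
    obtain ⟨z', hz'W, hz'⟩ := hzWj
    obtain ⟨v, hvH, hv⟩ := hz'W
    have hπv : πL v ≠ 0 := by
      intro h
      apply hz0
      rw [← hz', ← hv, h, map_zero]
    by_cases hbr : ∀ w ∈ H, br v w = 0
    · have hHle : H ≤ LinearMap.ker (g v) := by
        intro w hw
        rw [LinearMap.mem_ker]
        funext i
        fin_cases i <;> simp [g, hbr w hw]
      have hker4 : Module.finrank ℝ (LinearMap.ker (g v)) = 4 := by
        have e3 := LinearMap.finrank_range_add_finrank_ker (g v)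
        rw [LinearMap.range_eq_top.mpr (g_surj hπv), finrank_top,
          Module.finrank_fintype_fun_eq_card, Module.finrank_fintype_fun_eq_card,
          Fintype.card_fin, Fintype.card_fin] at e3
        omega
      have hHeq : H = LinearMap.ker (g v) :=
        Submodule.eq_of_le_of_finrank_le hHle (by rw [hker4, hdim])
      rw [hHeq]
      intro X hX
      rw [LinearMap.mem_ker]
      have h0 := br_zero_of_centre_right v X hX
      funext i
      fin_cases i <;> simp [g, h0]
    · push_neg at hbr
      obtain ⟨w, hwH, hc0⟩ := hbr
      have hcH : br v w ∈ H := hcl v hvH w hwH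
      have hJc : br u w = JL (br v w) := by
        calc br u w = br (πL u) w := (br_pi_left u w).symm
          _ = br (JL (πL v)) w := by rw [hu, ← hz', hv]; rfl
          _ = JL (br (πL v) w) := br_J_left _ _
          _ = JL (br v w) := by rw [br_pi_left]
      have hJcH : JL (br v w) ∈ H := hJc ▸ hcl u huH w hwH
      have hc45 : br v w 4 ≠ 0 ∨ br v w 5 ≠ 0 := by
        by_contra h
        push_neg at h
        apply hc0
        rw [br_eta v w, h.1, h.2]
        simp
      have hs : br v w 4 ^ 2 + br v w 5 ^ 2 ≠ 0 := by
        rcases hc45 with h | h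
        · intro hh; exact h (by nlinarith [sq_nonneg (br v w 4), sq_nonneg (br v w 5)])
        · intro hh; exact h (by nlinarith [sq_nonneg (br v w 4), sq_nonneg (br v w 5)])
      obtain ⟨cz0, cz1, cz2, cz3⟩ := (mem_centre (br v w)).mp (br_mem_centre v w)
      have hbrv : br v w = ![0, 0, 0, 0, br v w 4, br v w 5] := by
        funext i; fin_cases i <;> simp [cz0, cz1, cz2, cz3]
      have hJbr : JL (br v w) = ![0, 0, 0, 0, -(br v w 5), br v w 4] := by
        rw [JL_apply]; funext i; fin_cases i <;> simp [cz0, cz1, cz2, cz3]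
      have hE4 : (E 4 : Fin 6 → ℝ) = (br v w 4 ^ 2 + br v w 5 ^ 2)⁻¹ •
          (br v w 4 • br v w - br v w 5 • JL (br v w)) := by
        rw [hJbr, hbrv]
        funext i
        fin_cases i <;> simp [E, Pi.single_apply] <;>
          (first | (right; ring) | (field_simp; ring) | field_simp)
      have hE5 : (E 5 : Fin 6 → ℝ) = (br v w 4 ^ 2 + br v w 5 ^ 2)⁻¹ •
          (br v w 5 • br v w + br v w 4 • JL (br v w)) := by
        rw [hJbr, hbrv]
        funext i
        fin_cases i <;> simp [E, Pi.single_apply] <;>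
          (first | (right; ring) | (field_simp; ring) | field_simp)
      have hE4H : (E 4 : Fin 6 → ℝ) ∈ H := by
        rw [hE4]
        exact Submodule.smul_mem _ _ (sub_mem (Submodule.smul_mem _ _ hcH)
          (Submodule.smul_mem _ _ hJcH))
      have hE5H : (E 5 : Fin 6 → ℝ) ∈ H := by
        rw [hE5]
        exact Submodule.smul_mem _ _ (add_mem (Submodule.smul_mem _ _ hcH)
          (Submodule.smul_mem _ _ hJcH))
      rw [centre, Submodule.span_le]
      rintro x (rfl | rfl)
      · exact hE4H
      · exact hE5H
end Iw

namespace Iw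

lemma single_dot (i : Fin 6) (x : Fin 6 → ℝ) : (E i) ⬝ᵥ x = x i := by
  simp [E, dotProduct, Pi.single_apply, Finset.sum_ite_eq]

def fab (a b : Fin 6 → ℝ) : (Fin 6 → ℝ) →ₗ[ℝ] (Fin 2 → ℝ) where
  toFun X := ![X ⬝ᵥ a, X ⬝ᵥ b]
  map_add' X Y := by funext i; fin_cases i <;> simp [add_dotProduct]
  map_smul' c X := by funext i; fin_cases i <;> simp [smul_dotProduct]

lemma mem_ker_fab {a b X : Fin 6 → ℝ} :
    X ∈ LinearMap.ker (fab a b) ↔ X ⬝ᵥ a = 0 ∧ X ⬝ᵥ b = 0 := by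
  rw [LinearMap.mem_ker]
  constructor
  · intro h
    exact ⟨congrFun h 0, congrFun h 1⟩
  · rintro ⟨h1, h2⟩
    funext i; fin_cases i <;> simp [fab, h1, h2]

lemma part2 (a b : Fin 6 → ℝ) (ha : a ⬝ᵥ a = 1) (hb : b ⬝ᵥ b = 1) (hab : a ⬝ᵥ b = 0) :
    ((∀ X Y : Fin 6 → ℝ, X ⬝ᵥ a = 0 → X ⬝ᵥ b = 0 → Y ⬝ᵥ a = 0 → Y ⬝ᵥ b = 0 →
        br X Y ⬝ᵥ a = 0 ∧ br X Y ⬝ᵥ b = 0) ↔ (a ∈ V4 ∧ b ∈ V4)) := by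
  constructor
  · intro hint
    have hba : b ⬝ᵥ a = 0 := by rwa [dotProduct_comm]
    have hsurj : Function.Surjective (fab a b) := by
      intro pq
      refine ⟨pq 0 • a + pq 1 • b, ?_⟩
      funext i
      fin_cases i <;>
        simp [fab, add_dotProduct, smul_dotProduct, ha, hb, hab, hba]
    have hdim : Module.finrank ℝ (LinearMap.ker (fab a b)) = 4 := by
      have e3 := LinearMap.finrank_range_add_finrank_ker (fab a b)
      rw [LinearMap.range_eq_top.mpr hsurj, finrank_top,
        Module.finrank_fintype_fun_eq_card, Module.finrank_fintype_fun_eq_card,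
        Fintype.card_fin, Fintype.card_fin] at e3
      omega
    have hcl : ∀ X ∈ LinearMap.ker (fab a b), ∀ Y ∈ LinearMap.ker (fab a b),
        br X Y ∈ LinearMap.ker (fab a b) := by
      intro X hX Y hY
      rw [mem_ker_fab] at hX hY ⊢
      exact hint X Y hX.1 hX.2 hY.1 hY.2
    have hle := centre_le_of_closed _ hdim hcl
    have h4 := mem_ker_fab.mp (hle (Submodule.subset_span (by left; rfl)))
    have h5 := mem_ker_fab.mp (hle (Submodule.subset_span (by right; rfl)))
    rw [show (Pi.single 4 1 : Fin 6 → ℝ) = E 4 from rfl, single_dot, single_dot] at h4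
    rw [show (Pi.single 5 1 : Fin 6 → ℝ) = E 5 from rfl, single_dot, single_dot] at h5
    exact ⟨(mem_V4 a).mpr ⟨h4.1, h5.1⟩, (mem_V4 b).mpr ⟨h4.2, h5.2⟩⟩
  · rintro ⟨haV, hbV⟩ X Y hXa hXb hYa hYb
    obtain ⟨ha4, ha5⟩ := (mem_V4 a).mp haV
    obtain ⟨hb4, hb5⟩ := (mem_V4 b).mp hbV
    constructor <;>
      simp [dotProduct, Fin.sum_univ_six, br, ha4, ha5, hb4, hb5]

end Iw

namespace Iw

lemma square_bound (a0 a1 a2 a3 b0 b1 b2 b3 : ℝ)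
    (ha : a0*a0+a1*a1+a2*a2+a3*a3 = 1) (hb : b0*b0+b1*b1+b2*b2+b3*b3 = 1)
    (hab : a0*b0+a1*b1+a2*b2+a3*b3 = 0) :
    |b1*a0 - a1*b0| + |b3*a2 - a3*b2| ≤ 1 := by
  have lag : (a0*b1-a1*b0)^2 + (a2*b3-a3*b2)^2 + (a0*b2-a2*b0)^2 + (a0*b3-a3*b0)^2
      + (a1*b2-a2*b1)^2 + (a1*b3-a3*b1)^2 = 1 := by
    linear_combination (b0*b0+b1*b1+b2*b2+b3*b3) * ha + hb
      - (a0*b0+a1*b1+a2*b2+a3*b3) * hab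
  have h1 : ((a0*b1-a1*b0) + (a2*b3-a3*b2))^2 ≤ 1 := by
    nlinarith [lag, sq_nonneg ((a0*b2-a2*b0) - (a1*b3-a3*b1)),
      sq_nonneg ((a0*b3-a3*b0) + (a1*b2-a2*b1))]
  have h2 : ((a0*b1-a1*b0) - (a2*b3-a3*b2))^2 ≤ 1 := by
    nlinarith [lag, sq_nonneg ((a0*b2-a2*b0) + (a1*b3-a3*b1)),
      sq_nonneg ((a0*b3-a3*b0) - (a1*b2-a2*b1))]
  rcases abs_cases (b1*a0 - a1*b0) with ⟨hx, _⟩ | ⟨hx, _⟩ <;>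
    rcases abs_cases (b3*a2 - a3*b2) with ⟨hy, _⟩ | ⟨hy, _⟩ <;>
    rw [hx, hy] <;>
    nlinarith [h1, h2, sq_nonneg ((a0*b1-a1*b0) + (a2*b3-a3*b2) - 1),
      sq_nonneg ((a0*b1-a1*b0) + (a2*b3-a3*b2) + 1),
      sq_nonneg ((a0*b1-a1*b0) - (a2*b3-a3*b2) - 1),
      sq_nonneg ((a0*b1-a1*b0) - (a2*b3-a3*b2) + 1)]

lemma part3 :
    {p : ℝ × ℝ × ℝ | ∃ a b : Fin 6 → ℝ, a ∈ V4 ∧ b ∈ V4 ∧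
        a ⬝ᵥ a = 1 ∧ b ⬝ᵥ b = 1 ∧ a ⬝ᵥ b = 0 ∧
        p = μ (Matrix.vecMulVec b a - Matrix.vecMulVec a b)} =
      {p : ℝ × ℝ × ℝ | |p.1| + |p.2.1| ≤ 1 ∧ p.2.2 = 0} := by
  ext p
  simp only [Set.mem_setOf_eq]
  constructor
  · rintro ⟨a, b, haV, hbV, haa, hbb, hab, rfl⟩
    obtain ⟨ha4, ha5⟩ := (mem_V4 a).mp haV
    obtain ⟨hb4, hb5⟩ := (mem_V4 b).mp hbV
    rw [dotProduct, Fin.sum_univ_six] at haa hbb hab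
    rw [ha4, ha5] at haa hab
    rw [hb4, hb5] at hbb
    simp only [mul_zero, zero_mul, add_zero] at haa hbb hab
    constructor
    · have := square_bound (a 0) (a 1) (a 2) (a 3) (b 0) (b 1) (b 2) (b 3) haa hbb hab
      simpa [μ, Matrix.sub_apply, Matrix.vecMulVec_apply] using this
    · simp [μ, Matrix.sub_apply, Matrix.vecMulVec_apply, ha4, ha5, hb4, hb5]
  · rintro ⟨hle, hz⟩
    obtain ⟨x, y, z⟩ := p
    simp only at hle hz
    subst hz
    set σ := Real.arccos (x - y) with hσ
    set δ := Real.arccos (x + y) with hδ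
    set s := (σ + δ) / 2 with hs
    set t := (σ - δ) / 2 with ht
    have hxy1 : |x + y| ≤ 1 := le_trans (abs_add_le x y) hle
    have hxy2 : |x - y| ≤ 1 := le_trans (abs_sub x y) hle
    have hcσ : Real.cos σ = x - y :=
      Real.cos_arccos (neg_le_of_abs_le hxy2) (le_of_abs_le hxy2)
    have hcδ : Real.cos δ = x + y :=
      Real.cos_arccos (neg_le_of_abs_le hxy1) (le_of_abs_le hxy1)
    have hst1 : s + t = σ := by rw [hs, ht]; ring
    have hst2 : s - t = δ := by rw [hs, ht]; ring
    have hadd : Real.cos s * Real.cos t - Real.sin s * Real.sin t = x - y := by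
      rw [← Real.cos_add, hst1, hcσ]
    have hsub : Real.cos s * Real.cos t + Real.sin s * Real.sin t = x + y := by
      rw [← Real.cos_sub, hst2, hcδ]
    refine ⟨![Real.cos s, 0, Real.sin s, 0, 0, 0],
      ![0, Real.cos t, 0, Real.sin t, 0, 0], ?_, ?_, ?_, ?_, ?_, ?_⟩
    · exact (mem_V4 _).mpr ⟨rfl, rfl⟩
    · exact (mem_V4 _).mpr ⟨rfl, rfl⟩
    · simp [dotProduct, Fin.sum_univ_six]
      nlinarith [Real.sin_sq_add_cos_sq s]
    · simp [dotProduct, Fin.sum_univ_six]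
      nlinarith [Real.sin_sq_add_cos_sq t]
    · simp [dotProduct, Fin.sum_univ_six]
    · have e1 : Real.cos t * Real.cos s = x := by nlinarith [hadd, hsub]
      have e2 : Real.sin t * Real.sin s = y := by nlinarith [hadd, hsub]
      simp only [μ, Matrix.sub_apply, Matrix.vecMulVec_apply, Prod.mk.injEq]
      refine ⟨?_, ?_, ?_⟩ <;> simp [e1, e2]

end Iw

end IwAux

/-- (i) A 4-dimensional subspace `H` of the Iwasawa Lie algebra is a subalgebra
iff it contains the centre `span{e₅,e₆}`; (ii) an almost product structure
given by an orthonormal pair `a, b` has integrable 4-dimensional distribution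
`(span{a,b})ᗮ` exactly when `a, b ∈ span{e₁,e₂,e₃,e₄}`; (iii) the set of
moment values of this class of almost product structures is the square
`{(x,y,0) : |x| + |y| ≤ 1}`, the intersection of the moment octahedron with
the plane `z = 0`. -/
theorem iwasawa_integrable_horizontal :
    (∀ H : Submodule ℝ (Fin 6 → ℝ), Module.finrank ℝ H = 4 →
      ((∀ X ∈ H, ∀ Y ∈ H, br X Y ∈ H) ↔ centre ≤ H)) ∧
    (∀ a b : Fin 6 → ℝ, a ⬝ᵥ a = 1 → b ⬝ᵥ b = 1 → a ⬝ᵥ b = 0 →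
      ((∀ X Y : Fin 6 → ℝ, X ⬝ᵥ a = 0 → X ⬝ᵥ b = 0 → Y ⬝ᵥ a = 0 → Y ⬝ᵥ b = 0 →
          br X Y ⬝ᵥ a = 0 ∧ br X Y ⬝ᵥ b = 0) ↔ (a ∈ V4 ∧ b ∈ V4))) ∧
    {p : ℝ × ℝ × ℝ | ∃ a b : Fin 6 → ℝ, a ∈ V4 ∧ b ∈ V4 ∧
        a ⬝ᵥ a = 1 ∧ b ⬝ᵥ b = 1 ∧ a ⬝ᵥ b = 0 ∧
        p = μ (vecMulVec b a - vecMulVec a b)} =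
      {p : ℝ × ℝ × ℝ | |p.1| + |p.2.1| ≤ 1 ∧ p.2.2 = 0} := by
  refine ⟨?_, ?_, ?_⟩
  · intro H hdim
    exact ⟨fun hcl => Iw.centre_le_of_closed H hdim hcl,
      fun hle X _ Y _ => hle (Iw.br_mem_centre X Y)⟩
  · exact Iw.part2
  · exact Iw.part3
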